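/- The Löwner function commutes with affine maps: if L(f)(x) = e^{−‖A₀x‖+t₀} is the Löwner function of f ∈ LC, then for every nonsingular affine map B, L(Bf) = B(L(f)), i.e., L(Bf)(x) = e^{−‖A₀Bx‖+t₀}. -/

import Mathlib

open MeasureTheory Filter
noncomputable section

/-- `ℝⁿ` as a Euclidean space. -/
abbrev Euc (n : ℕ) := EuclideanSpace ℝ (Fin n)

/-- `f` is a non-degenerate, upper semicontinuous, integrable log-concave
function on `ℝⁿ` (the class `LC`): `f ≥ 0`, `f` is upper semicontinuous,
log-concave, integrable with `0 < ∫ f`, and the interior of its support is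
non-empty. -/
def IsLC {n : ℕ} (f : Euc n → ℝ) : Prop :=
  (∀ x, 0 ≤ f x) ∧ UpperSemicontinuous f ∧
  (∀ x y : Euc n, ∀ a b : ℝ, 0 ≤ a → 0 ≤ b → a + b = 1 →
      f x ^ a * f y ^ b ≤ f (a • x + b • y)) ∧
  Integrable f ∧ 0 < ∫ x, f x ∧ (interior (Function.support f)).Nonempty

/-- `(A, t)` is a Löwner pair for `f`: `A` is a nonsingular affine map,
`e^{−(‖Ax‖−t)} ≥ f(x)` for all `x` (the constraint `‖Ax‖ − t ≤ ψ(x)`), and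
`∫ e^{−‖Ax‖+t} dx` is minimal among all admissible pairs; the Löwner
function of `f` is then `L(f)(x) = e^{−‖Ax‖+t}`. -/
def IsLownerPair {n : ℕ} (f : Euc n → ℝ) (A : Euc n →ᵃ[ℝ] Euc n) (t : ℝ) : Prop :=
  Function.Bijective A ∧ (∀ x, f x ≤ Real.exp (-‖A x‖ + t)) ∧
  ∀ (A' : Euc n →ᵃ[ℝ] Euc n) (t' : ℝ), Function.Bijective A' →
    (∀ x, f x ≤ Real.exp (-‖A' x‖ + t')) →
    ∫ x, Real.exp (-‖A x‖ + t) ≤ ∫ x, Real.exp (-‖A' x‖ + t')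

/-!
Precomposing with a nonsingular affine map `B` is a bijection between the admissible pairs
`(A, t)` of `f` and those of `f ∘ B` (`A ↦ A ∘ B`, with inverse `A ↦ A ∘ B⁻¹`), and by the
change of variables formula it multiplies every integral `∫ e^{−‖Ax‖+t} dx` by the same positive
constant `|det B|⁻¹`. Hence it maps minimizers to minimizers.
-/

section ChangeOfVariables

variable {E F : Type*} [NormedAddCommGroup E] [NormedSpace ℝ E] [MeasurableSpace E]
  [BorelSpace E] [FiniteDimensional ℝ E] (μ : Measure E) [μ.IsAddHaarMeasure]
  [NormedAddCommGroup F] [NormedSpace ℝ F]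

theorem integral_comp_linearEquiv (L : E ≃ₗ[ℝ] E) (g : E → F) :
    ∫ x, g (L x) ∂μ = |LinearMap.det (L : E →ₗ[ℝ] E)|⁻¹ • ∫ x, g x ∂μ := by
  have hmap : μ.map L = ENNReal.ofReal |(LinearMap.det (L : E →ₗ[ℝ] E))⁻¹| • μ :=
    Measure.map_linearMap_addHaar_eq_smul_addHaar μ L.isUnit_det'.ne_zero
  calc ∫ x, g (L x) ∂μ = ∫ x, g x ∂(μ.map L) :=
        (integral_map_equiv L.toContinuousLinearEquiv.toHomeomorph.toMeasurableEquiv g).symm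
    _ = _ := by rw [hmap, integral_smul_measure, ENNReal.toReal_ofReal (abs_nonneg _), abs_inv]

theorem integral_comp_affineEquiv (B : E ≃ᵃ[ℝ] E) (g : E → F) :
    ∫ x, g (B x) ∂μ = |LinearMap.det (B.linear : E →ₗ[ℝ] E)|⁻¹ • ∫ x, g x ∂μ := by
  have hB : (fun x => g (B x)) = fun x => g (B.linear x + B 0) := funext fun x => by
    simpa using congrArg g (congrFun B.toAffineMap.decomp x)
  rw [hB, integral_comp_linearEquiv μ B.linear (fun y => g (y + B 0)),
    integral_add_right_eq_self g (B 0)]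

end ChangeOfVariables

theorem loewner_affine_covariant_general (n : ℕ) (f : Euc n → ℝ)
    (A₀ : Euc n →ᵃ[ℝ] Euc n) (t₀ : ℝ) (h : IsLownerPair f A₀ t₀)
    (B : Euc n ≃ᵃ[ℝ] Euc n) :
    IsLownerPair (fun x => f (B x)) (A₀.comp B.toAffineMap) t₀ := by
  obtain ⟨hA₀, hle, hmin⟩ := h
  set c := |LinearMap.det (B.linear : Euc n →ₗ[ℝ] Euc n)|⁻¹
  refine ⟨hA₀.comp B.bijective, fun x => hle (B x), fun A' t' hA' hle' => ?_⟩
  have hadm : ∀ x, f x ≤ Real.exp (-‖A' (B.symm x)‖ + t') := fun x => by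
    simpa using hle' (B.symm x)
  have hcomp₀ : ∫ x, Real.exp (-‖A₀ (B x)‖ + t₀) = c * ∫ x, Real.exp (-‖A₀ x‖ + t₀) :=
    integral_comp_affineEquiv volume B (fun y => Real.exp (-‖A₀ y‖ + t₀))
  have hcomp' : ∫ x, Real.exp (-‖A' x‖ + t') = c * ∫ x, Real.exp (-‖A' (B.symm x)‖ + t') := by
    simpa using integral_comp_affineEquiv volume B (fun y => Real.exp (-‖A' (B.symm y)‖ + t'))
  change ∫ x, Real.exp (-‖A₀ (B x)‖ + t₀) ≤ _
  rw [hcomp₀, hcomp']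
  exact mul_le_mul_of_nonneg_left
    (hmin (A'.comp B.symm.toAffineMap) t' (hA'.comp B.symm.bijective) hadm) (by positivity)

/-- the Löwner function commutes with nonsingular affine maps:
if `L(f)(x) = e^{−‖A₀x‖+t₀}` then `L(Bf)(x) = e^{−‖A₀Bx‖+t₀} = B(L(f))(x)`,
i.e. `(A₀ ∘ B, t₀)` is a Löwner pair for `Bf`. -/
theorem loewner_affine_covariant (n : ℕ) (f : Euc n → ℝ) (hf : IsLC f)
    (A₀ : Euc n →ᵃ[ℝ] Euc n) (t₀ : ℝ) (h : IsLownerPair f A₀ t₀)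
    (B : Euc n ≃ᵃ[ℝ] Euc n) :
    IsLownerPair (fun x => f (B x)) (A₀.comp B.toAffineMap) t₀ :=
  loewner_affine_covariant_general n f A₀ t₀ h B
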